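/- arXiv:1503.02573 — 3 statements merged into one kernel-verified Lean document; each statement's English description precedes it below -/
import Mathlib

section
/- Let Ψ : ℝ₊ × C¹ → ℝ₊ be a Lyapunov function for the ODE system ẋ = f(t,x), and suppose there exist positive integers ς₁, ς₂, ς₃, constants L > 0 and ζ ≥ 0, and positive continuous functions ϑ₁, ϑ₂, ϑ₃ of t with ϑ₁ nondecreasing, such that for all t ≥ 0: (A1) ϑ₁(t)‖x(t)‖^{ς₁} ≤ Ψ(t,x) ≤ ϑ₂(t)‖x(t)‖^{ς₂}, (A2) dΨ/dt(t,x) ≤ −ϑ₃(t)‖x(t)‖^{ς₃} + L, and (A3) Ψ(t,x) − Ψ(t,x)^{ς₃/ς₂} ≤ ζ. Then the solution x is bounded on ℝ₊; explicitly, ‖x(t)‖ ≤ ϑ₁(0)^{−1/ς₁}(ϑ₂(0)‖x₀‖^{ς₂} + (L+aζ)/a)^{1/ς₁} where a = inf_{t≥0} ϑ₃(t)/ϑ₂(t)^{ς₃/ς₂} is assumed positive. -/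
open Real Set

/-!
Comparing (A1) with the definition of `a` gives `a Ψ^{ς₃/ς₂} ≤ ϑ₃ ‖x‖^{ς₃}`, and (A3) turns
this into `a (Ψ - ζ) ≤ ϑ₃ ‖x‖^{ς₃}`. Hence (A2) yields the linear differential inequality
`Ψ' ≤ -a Ψ + (L + a ζ)`, and Grönwall's inequality bounds `Ψ` by `Ψ(0) + (L + a ζ) / a`.
Squeezing this between the two sides of (A1), using that `ϑ₁` is nondecreasing, bounds `‖x‖`.
-/

lemma mul_rpow_le_of_le_mul_pow {a b c y Ψ : ℝ} {p q : ℕ} (hp : p ≠ 0) (hΨ : 0 ≤ Ψ)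
    (hb : 0 < b) (hc : 0 ≤ c) (hy : 0 ≤ y) (hΨle : Ψ ≤ b * y ^ p)
    (ha : a ≤ c / b ^ ((q : ℝ) / p)) :
    a * Ψ ^ ((q : ℝ) / p) ≤ c * y ^ q := by
  have hbr : 0 < b ^ ((q : ℝ) / p) := rpow_pos_of_pos hb _
  have hpow : (y ^ p) ^ ((q : ℝ) / p) = y ^ q := by
    rw [← rpow_natCast y p, ← rpow_mul hy, mul_div_cancel₀ _ (Nat.cast_ne_zero.2 hp),
      rpow_natCast]
  calc a * Ψ ^ ((q : ℝ) / p) ≤ c / b ^ ((q : ℝ) / p) * Ψ ^ ((q : ℝ) / p) := by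
        gcongr
    _ ≤ c / b ^ ((q : ℝ) / p) * (b * y ^ p) ^ ((q : ℝ) / p) := by gcongr
    _ = c * y ^ q := by
        rw [mul_rpow hb.le (by positivity), hpow]
        field_simp

lemma le_add_div_of_hasDerivAt_le_neg_mul_add {Ψ Ψ' : ℝ → ℝ} {a c t : ℝ} (ha : 0 < a)
    (hc : 0 ≤ c) (hΨ₀ : 0 ≤ Ψ 0) (hderiv : ∀ s, 0 ≤ s → HasDerivAt Ψ (Ψ' s) s)
    (hineq : ∀ s, 0 ≤ s → Ψ' s ≤ -a * Ψ s + c) (ht : 0 ≤ t) :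
    Ψ t ≤ Ψ 0 + c / a := by
  have hG := le_gronwallBound_of_liminf_deriv_right_le (δ := Ψ 0) (K := -a) (ε := c)
    (fun s hs => (hderiv s hs.1).continuousAt.continuousWithinAt)
    (fun s hs _ hr => (hderiv s hs.1).hasDerivWithinAt.liminf_right_slope_le hr)
    le_rfl (fun s hs => hineq s hs.1) t ⟨ht, le_rfl⟩
  rw [gronwallBound_of_K_ne_0 (neg_ne_zero.2 ha.ne'), div_neg, sub_zero] at hG
  have hexp_le : exp (-a * t) ≤ 1 := exp_le_one_iff.2 (by nlinarith)
  have hexp_pos : 0 < exp (-a * t) := exp_pos _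
  have hca : 0 ≤ c / a := div_nonneg hc ha.le
  nlinarith

lemma le_rpow_mul_rpow_of_mul_pow_le {k y B : ℝ} {m : ℕ} (hm : m ≠ 0) (hk : 0 < k)
    (hy : 0 ≤ y) (h : k * y ^ m ≤ B) :
    y ≤ k ^ (-(1 : ℝ) / m) * B ^ ((1 : ℝ) / m) := by
  have hB : 0 ≤ B := le_trans (by positivity) h
  have hym : y ^ m ≤ B / k := (le_div_iff₀ hk).2 (by linarith)
  calc y = (y ^ m) ^ ((1 : ℝ) / m) := by rw [one_div, pow_rpow_inv_natCast hy hm]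
    _ ≤ (B / k) ^ ((1 : ℝ) / m) := by gcongr
    _ = k ^ (-(1 : ℝ) / m) * B ^ ((1 : ℝ) / m) := by
        rw [div_rpow hB hk.le, neg_div, rpow_neg hk.le, div_eq_inv_mul]

theorem lyapunov_boundedness_general
    {n : ℕ} (x : ℝ → EuclideanSpace ℝ (Fin n))
    (Ψ Ψ' : ℝ → ℝ) (ϑ₁ ϑ₂ ϑ₃ : ℝ → ℝ) (ς₁ ς₂ ς₃ : ℕ) (L ζ a : ℝ)
    (hς₁ : 0 < ς₁) (hς₂ : 0 < ς₂)
    (hL : 0 < L) (hζ : 0 ≤ ζ)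
    (hϑ₁pos : ∀ t, 0 ≤ t → 0 < ϑ₁ t) (hϑ₂pos : ∀ t, 0 ≤ t → 0 < ϑ₂ t)
    (hϑ₃pos : ∀ t, 0 ≤ t → 0 < ϑ₃ t)
    (hϑ₁mono : MonotoneOn ϑ₁ (Ici (0 : ℝ)))
    (hA1 : ∀ t, 0 ≤ t →
      ϑ₁ t * ‖x t‖ ^ ς₁ ≤ Ψ t ∧ Ψ t ≤ ϑ₂ t * ‖x t‖ ^ ς₂)
    (hΨderiv : ∀ t, 0 ≤ t → HasDerivAt Ψ (Ψ' t) t)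
    (hA2 : ∀ t, 0 ≤ t → Ψ' t ≤ -ϑ₃ t * ‖x t‖ ^ ς₃ + L)
    (hA3 : ∀ t, 0 ≤ t → Ψ t - Ψ t ^ ((ς₃ : ℝ) / (ς₂ : ℝ)) ≤ ζ)
    (ha : a = ⨅ t : Ici (0 : ℝ), ϑ₃ t / ϑ₂ t ^ ((ς₃ : ℝ) / (ς₂ : ℝ)))
    (hapos : 0 < a) :
    ∀ t, 0 ≤ t →
      ‖x t‖ ≤ ϑ₁ 0 ^ (-(1 : ℝ) / (ς₁ : ℝ)) *
        (ϑ₂ 0 * ‖x 0‖ ^ ς₂ + (L + a * ζ) / a) ^ ((1 : ℝ) / (ς₁ : ℝ)) := by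
  intro t ht
  have hΨ_nonneg : ∀ s, 0 ≤ s → 0 ≤ Ψ s := fun s hs =>
    le_trans (mul_nonneg (hϑ₁pos s hs).le (by positivity)) (hA1 s hs).1
  have ha_le : ∀ s, 0 ≤ s → a ≤ ϑ₃ s / ϑ₂ s ^ ((ς₃ : ℝ) / ς₂) := by
    intro s hs
    rw [ha]
    refine ciInf_le ⟨0, ?_⟩ (⟨s, hs⟩ : Ici (0 : ℝ))
    rintro _ ⟨⟨u, hu⟩, rfl⟩
    exact div_nonneg (hϑ₃pos u hu).le (rpow_nonneg (hϑ₂pos u hu).le _)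
  have hineq : ∀ s, 0 ≤ s → Ψ' s ≤ -a * Ψ s + (L + a * ζ) := fun s hs => by
    have hcomp := mul_rpow_le_of_le_mul_pow hς₂.ne' (hΨ_nonneg s hs) (hϑ₂pos s hs)
      (hϑ₃pos s hs).le (norm_nonneg _) (hA1 s hs).2 (ha_le s hs)
    nlinarith [hA2 s hs, hA3 s hs]
  have hΨ_le := le_add_div_of_hasDerivAt_le_neg_mul_add hapos (by positivity)
    (hΨ_nonneg 0 le_rfl) hΨderiv hineq ht
  refine le_rpow_mul_rpow_of_mul_pow_le hς₁.ne' (hϑ₁pos 0 le_rfl) (norm_nonneg _) ?_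
  calc ϑ₁ 0 * ‖x t‖ ^ ς₁ ≤ ϑ₁ t * ‖x t‖ ^ ς₁ := by
        gcongr
        exact hϑ₁mono self_mem_Ici ht ht
    _ ≤ Ψ t := (hA1 t ht).1
    _ ≤ Ψ 0 + (L + a * ζ) / a := hΨ_le
    _ ≤ ϑ₂ 0 * ‖x 0‖ ^ ς₂ + (L + a * ζ) / a := by gcongr; exact (hA1 0 le_rfl).2

/-- Lyapunov-type boundedness theorem: under (A1)-(A3) and positivity of
`a = inf ϑ₃/ϑ₂^{ς₃/ς₂}`, the solution is explicitly bounded. -/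
theorem lyapunov_boundedness
    {n : ℕ} (x : ℝ → EuclideanSpace ℝ (Fin n))
    (Ψ Ψ' : ℝ → ℝ) (ϑ₁ ϑ₂ ϑ₃ : ℝ → ℝ) (ς₁ ς₂ ς₃ : ℕ) (L ζ a : ℝ)
    (hς₁ : 0 < ς₁) (hς₂ : 0 < ς₂) (hς₃ : 0 < ς₃)
    (hL : 0 < L) (hζ : 0 ≤ ζ)
    (hϑ₁c : Continuous ϑ₁) (hϑ₂c : Continuous ϑ₂) (hϑ₃c : Continuous ϑ₃)
    (hϑ₁pos : ∀ t, 0 ≤ t → 0 < ϑ₁ t) (hϑ₂pos : ∀ t, 0 ≤ t → 0 < ϑ₂ t)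
    (hϑ₃pos : ∀ t, 0 ≤ t → 0 < ϑ₃ t)
    (hϑ₁mono : MonotoneOn ϑ₁ (Ici (0 : ℝ)))
    (hΨnonneg : ∀ t, 0 ≤ t → 0 ≤ Ψ t)
    (hA1 : ∀ t, 0 ≤ t →
      ϑ₁ t * ‖x t‖ ^ ς₁ ≤ Ψ t ∧ Ψ t ≤ ϑ₂ t * ‖x t‖ ^ ς₂)
    (hΨderiv : ∀ t, 0 ≤ t → HasDerivAt Ψ (Ψ' t) t)
    (hA2 : ∀ t, 0 ≤ t → Ψ' t ≤ -ϑ₃ t * ‖x t‖ ^ ς₃ + L)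
    (hA3 : ∀ t, 0 ≤ t → Ψ t - Ψ t ^ ((ς₃ : ℝ) / (ς₂ : ℝ)) ≤ ζ)
    (ha : a = ⨅ t : Ici (0 : ℝ), ϑ₃ t / ϑ₂ t ^ ((ς₃ : ℝ) / (ς₂ : ℝ)))
    (hapos : 0 < a) :
    ∀ t, 0 ≤ t →
      ‖x t‖ ≤ ϑ₁ 0 ^ (-(1 : ℝ) / (ς₁ : ℝ)) *
        (ϑ₂ 0 * ‖x 0‖ ^ ς₂ + (L + a * ζ) / a) ^ ((1 : ℝ) / (ς₁ : ℝ)) :=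
  lyapunov_boundedness_general x Ψ Ψ' ϑ₁ ϑ₂ ϑ₃ ς₁ ς₂ ς₃ L ζ a hς₁ hς₂ hL hζ hϑ₁pos hϑ₂pos hϑ₃pos
    hϑ₁mono hA1 hΨderiv hA2 hA3 ha hapos
end

section
/- Let Γ₂ be the 5×5 matrix with rows [−d₁,0,0,0,b₁], [0,−d₂,0,0,b₂], [b₃,0,−d₃,0,0], [0,b₄,0,−d₄,0], [0,0,b₅,b₆,−d₅], with all bᵢ, dᵢ > 0. If R(d₃,d₄) := ((b₁b₃b₅)/(d₁d₃d₅) + (b₂b₄b₆)/(d₂d₄d₅))^{1/3} < 1, then every eigenvalue of Γ₂ has negative real part. -/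
open Real Complex

/-!
Dividing the characteristic equation of `Γ₂` by `∏ᵢ (μ + dᵢ)` turns it into `1 = G(μ)` with
`G(μ) = b₁b₃b₅ / ((μ+d₁)(μ+d₃)(μ+d₅)) + b₂b₄b₆ / ((μ+d₂)(μ+d₄)(μ+d₅))`.
If `Re μ ≥ 0` then `‖μ + dᵢ‖ ≥ dᵢ`, so `1 = ‖G(μ)‖ ≤ G(0) = R(d₃,d₄)³ < 1`, which is absurd.
-/

section

variable {R : Type*} [CommRing R] (b₁ b₂ b₃ b₄ b₅ b₆ d₁ d₂ d₃ d₄ d₅ : R)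

def mosquitoMatrix : Matrix (Fin 5) (Fin 5) R :=
  !![-d₁, 0, 0, 0, b₁;
     0, -d₂, 0, 0, b₂;
     b₃, 0, -d₃, 0, 0;
     0, b₄, 0, -d₄, 0;
     0, 0, b₅, b₆, -d₅]

theorem mosquitoMatrix_map {S : Type*} [CommRing S] (f : R →+* S) :
    (mosquitoMatrix b₁ b₂ b₃ b₄ b₅ b₆ d₁ d₂ d₃ d₄ d₅).map f =
      mosquitoMatrix (f b₁) (f b₂) (f b₃) (f b₄) (f b₅) (f b₆)
        (f d₁) (f d₂) (f d₃) (f d₄) (f d₅) := by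
  ext i j
  fin_cases i <;> fin_cases j <;> simp [mosquitoMatrix]

theorem eval_charpoly_mosquitoMatrix (μ : R) :
    (mosquitoMatrix b₁ b₂ b₃ b₄ b₅ b₆ d₁ d₂ d₃ d₄ d₅).charpoly.eval μ =
      (μ + d₁) * (μ + d₂) * (μ + d₃) * (μ + d₄) * (μ + d₅)
        - b₁ * b₃ * b₅ * ((μ + d₂) * (μ + d₄))
        - b₂ * b₄ * b₆ * ((μ + d₁) * (μ + d₃)) := by
  rw [Matrix.eval_charpoly, Matrix.det_succ_row_zero]
  simp [mosquitoMatrix, Matrix.det_succ_row_zero, Fin.sum_univ_succ, Fin.succAbove]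
  ring

end

theorem le_norm_add_ofReal {μ : ℂ} (hμ : 0 ≤ μ.re) (d : ℝ) : d ≤ ‖μ + d‖ :=
  calc d ≤ (μ + d).re := by simpa using hμ
    _ ≤ ‖μ + d‖ := re_le_norm _

theorem norm_div_mul_mul_le {μ : ℂ} (hμ : 0 ≤ μ.re) {c x y z : ℝ} (hc : 0 ≤ c)
    (hx : 0 < x) (hy : 0 < y) (hz : 0 < z) :
    ‖(c : ℂ) / ((μ + x) * (μ + y) * (μ + z))‖ ≤ c / (x * y * z) := by
  rw [norm_div, norm_mul, norm_mul, norm_real, norm_of_nonneg hc]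
  gcongr <;> exact le_norm_add_ofReal hμ _

theorem one_le_of_eval_charpoly_mosquitoMatrix_eq_zero
    {b₁ b₂ b₃ b₄ b₅ b₆ d₁ d₂ d₃ d₄ d₅ : ℝ}
    (hb₁ : 0 ≤ b₁) (hb₂ : 0 ≤ b₂) (hb₃ : 0 ≤ b₃) (hb₄ : 0 ≤ b₄) (hb₅ : 0 ≤ b₅) (hb₆ : 0 ≤ b₆)
    (hd₁ : 0 < d₁) (hd₂ : 0 < d₂) (hd₃ : 0 < d₃) (hd₄ : 0 < d₄) (hd₅ : 0 < d₅)
    {μ : ℂ} (hμ : 0 ≤ μ.re)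
    (h : (mosquitoMatrix (b₁ : ℂ) b₂ b₃ b₄ b₅ b₆ d₁ d₂ d₃ d₄ d₅).charpoly.eval μ = 0) :
    1 ≤ b₁ * b₃ * b₅ / (d₁ * d₃ * d₅) + b₂ * b₄ * b₆ / (d₂ * d₄ * d₅) := by
  have hne : ∀ d : ℝ, 0 < d → μ + d ≠ 0 := fun d hd h0 => by
    have := le_norm_add_ofReal hμ d
    rw [h0, norm_zero] at this
    linarith
  have h₁ := hne _ hd₁; have h₂ := hne _ hd₂; have h₃ := hne _ hd₃; have h₄ := hne _ hd₄
  have h₅ := hne _ hd₅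
  have hG : (1 : ℂ) = ((b₁ * b₃ * b₅ : ℝ) : ℂ) / ((μ + d₁) * (μ + d₃) * (μ + d₅))
      + ((b₂ * b₄ * b₆ : ℝ) : ℂ) / ((μ + d₂) * (μ + d₄) * (μ + d₅)) := by
    rw [eval_charpoly_mosquitoMatrix] at h
    field_simp
    push_cast
    linear_combination h
  calc (1 : ℝ) = ‖(1 : ℂ)‖ := norm_one.symm
    _ ≤ _ := by
      rw [hG]
      refine (norm_add_le _ _).trans (add_le_add ?_ ?_) <;>
        exact norm_div_mul_mul_le hμ (by positivity) ‹_› ‹_› ‹_›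

/-- If the basic mosquito offspring number
`R(d₃,d₄) = ((b₁b₃b₅)/(d₁d₃d₅) + (b₂b₄b₆)/(d₂d₄d₅))^{1/3} < 1`, then every
eigenvalue of the matrix `Γ₂` has negative real part. -/
theorem gamma2_eigenvalues_negative_real_part
    (b₁ b₂ b₃ b₄ b₅ b₆ d₁ d₂ d₃ d₄ d₅ : ℝ)
    (hb₁ : 0 < b₁) (hb₂ : 0 < b₂) (hb₃ : 0 < b₃) (hb₄ : 0 < b₄)
    (hb₅ : 0 < b₅) (hb₆ : 0 < b₆)
    (hd₁ : 0 < d₁) (hd₂ : 0 < d₂) (hd₃ : 0 < d₃) (hd₄ : 0 < d₄) (hd₅ : 0 < d₅)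
    (Γ₂ : Matrix (Fin 5) (Fin 5) ℝ)
    (hΓ₂ : Γ₂ = !![-d₁, 0, 0, 0, b₁;
                   0, -d₂, 0, 0, b₂;
                   b₃, 0, -d₃, 0, 0;
                   0, b₄, 0, -d₄, 0;
                   0, 0, b₅, b₆, -d₅])
    (hR : (b₁ * b₃ * b₅ / (d₁ * d₃ * d₅) + b₂ * b₄ * b₆ / (d₂ * d₄ * d₅)) ^
        ((1 : ℝ) / 3) < 1) :
    ∀ μ ∈ (Γ₂.map (fun a : ℝ => (a : ℂ))).charpoly.roots, μ.re < 0 := by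
  have hS : b₁ * b₃ * b₅ / (d₁ * d₃ * d₅) + b₂ * b₄ * b₆ / (d₂ * d₄ * d₅) < 1 :=
    (rpow_lt_one_iff' (by positivity) (by norm_num)).1 hR
  intro μ hμ
  by_contra! hre
  have hroot := Polynomial.isRoot_of_mem_roots hμ
  rw [hΓ₂, ← mosquitoMatrix, show (fun a : ℝ => (a : ℂ)) = ofRealHom from rfl,
    mosquitoMatrix_map] at hroot
  exact hS.not_ge <| one_le_of_eval_charpoly_mosquitoMatrix_eq_zero hb₁.le hb₂.le hb₃.le hb₄.le
    hb₅.le hb₆.le hd₁ hd₂ hd₃ hd₄ hd₅ hre hroot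
end

section
/- For each fixed (t,y) ∈ [0,T] × ℝ₊⁶, the set S(t,y) := { (g(y,u) + γ, Y₁(y,u), …, Y₆(y,u)) : γ ≥ 0, u ∈ B } ⊆ ℝ⁷ is convex, where B = [0,a₁]×[0,a₂], g(y,u) = ½(∑ᵢ ω_{x,i} yᵢ² + ω_{u,1}u₁² + ω_{u,2}u₂²) is convex quadratic in u, and each component Yᵢ(y,u) is affine in u with Y₁ depending only on u₁ (linearly), Y₂ constant in u, Y₃ affine in (u₁,u₂), Y₄ and Y₅ affine in u₂, and Y₆ ≡ 1. -/
open Set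

/-! The set is the image of the epigraph of `g` over the control box under the affine map
`(u, r) ↦ (r, Y u)`: the box is convex, `g` is convex there because its weights are positive, and
affine images of convex sets are convex. -/

section Epigraph

variable {E F : Type*} [AddCommGroup E] [Module ℝ E] [AddCommGroup F] [Module ℝ F]
  {K : Set E} {g : E → ℝ}

theorem ConvexOn.convex_epigraph_affineMap_image (hg : ConvexOn ℝ K g) (Y : E →ᵃ[ℝ] F) :
    Convex ℝ {p : ℝ × F | ∃ u ∈ K, g u ≤ p.1 ∧ Y u = p.2} := by
  have himage : {p : ℝ × F | ∃ u ∈ K, g u ≤ p.1 ∧ Y u = p.2} =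
      AffineMap.snd.prod (Y.comp AffineMap.fst) '' {p : E × ℝ | p.1 ∈ K ∧ g p.1 ≤ p.2} := by
    ext ⟨r, z⟩
    simp [and_assoc]
  exact himage ▸ hg.convex_epigraph.affine_image _

theorem ConvexOn.convex_setOf_exists_nonneg_eq_finCons {n : ℕ} (hg : ConvexOn ℝ K g)
    (Y : E →ᵃ[ℝ] (Fin n → ℝ)) :
    Convex ℝ {ξ : Fin (n + 1) → ℝ | ∃ γ : ℝ, 0 ≤ γ ∧ ∃ u ∈ K,
      ξ 0 = g u + γ ∧ ∀ i : Fin n, ξ i.succ = Y u i} := by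
  have hT : Convex ℝ ((Fin.consLinearEquiv ℝ fun _ : Fin (n + 1) => ℝ).symm ⁻¹'
      {p | ∃ u ∈ K, g u ≤ p.1 ∧ Y u = p.2}) :=
    (hg.convex_epigraph_affineMap_image Y).linear_preimage _
  convert hT using 1
  ext ξ
  constructor
  · rintro ⟨γ, hγ, u, hu, hξ₀, hξY⟩
    exact ⟨u, hu, (le_add_of_nonneg_right hγ).trans_eq hξ₀.symm, funext fun i => (hξY i).symm⟩
  · rintro ⟨u, hu, hgu, hYu⟩
    exact ⟨ξ 0 - g u, sub_nonneg.2 hgu, u, hu, (add_sub_cancel _ _).symm,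
      fun i => congrFun hYu.symm i⟩

end Epigraph

theorem convexOn_mul_apply_sq {ι : Type*} (i : ι) {ω : ℝ} (hω : 0 ≤ ω) :
    ConvexOn ℝ univ fun u : ι → ℝ => ω * u i ^ 2 :=
  have hsq : ConvexOn ℝ univ fun u : ι → ℝ => u i ^ 2 :=
    (even_two.convexOn_pow (𝕜 := ℝ)).comp_linearMap
      (LinearMap.proj (R := ℝ) (φ := fun _ : ι => ℝ) i)
  hsq.smul hω

theorem filippov_cesari_set_convex_general
    (a₁ a₂ : ℝ)
    (ω₁ ω₂ Wy : ℝ) (hω₁ : 0 < ω₁) (hω₂ : 0 < ω₂)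
    (g : (Fin 2 → ℝ) → ℝ)
    (hg : ∀ u, g u = (1 / 2) * (Wy + ω₁ * (u 0) ^ 2 + ω₂ * (u 1) ^ 2))
    (Y : (Fin 2 → ℝ) → Fin 6 → ℝ)
    -- each component of Y is affine in u
    (c0 c1 c2 : Fin 6 → ℝ)
    (hY : ∀ u i, Y u i = c0 i + c1 i * u 0 + c2 i * u 1) :
    Convex ℝ {ξ : Fin 7 → ℝ | ∃ γ : ℝ, 0 ≤ γ ∧ ∃ u : Fin 2 → ℝ,
      u 0 ∈ Icc 0 a₁ ∧ u 1 ∈ Icc 0 a₂ ∧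
      ξ 0 = g u + γ ∧ ∀ i : Fin 6, ξ i.succ = Y u i} := by
  set K : Set (Fin 2 → ℝ) := {u | u 0 ∈ Icc 0 a₁ ∧ u 1 ∈ Icc 0 a₂}
  have hK : Convex ℝ K :=
    let π (i : Fin 2) := LinearMap.proj (R := ℝ) (φ := fun _ : Fin 2 => ℝ) i
    ((convex_Icc 0 a₁).linear_preimage (π 0)).inter ((convex_Icc 0 a₂).linear_preimage (π 1))
  have hg_convex : ConvexOn ℝ K g := by
    rw [funext hg]
    exact ((((convexOn_const Wy convex_univ).add (convexOn_mul_apply_sq 0 hω₁.le)).add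
      (convexOn_mul_apply_sq 1 hω₂.le)).smul (by norm_num)).subset (subset_univ K) hK
  let Yₐ : (Fin 2 → ℝ) →ᵃ[ℝ] (Fin 6 → ℝ) :=
    { toFun := Y
      linear := (LinearMap.proj 0).smulRight c1 + (LinearMap.proj 1).smulRight c2
      map_vadd' := fun u v => by
        ext i
        simp only [vadd_eq_add, hY, Pi.add_apply, LinearMap.add_apply, LinearMap.smulRight_apply,
          LinearMap.coe_proj, Function.eval, Pi.smul_apply, smul_eq_mul]
        ring }
  have hS := hg_convex.convex_setOf_exists_nonneg_eq_finCons Yₐ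
  simp only [K, mem_ofPred_eq, and_assoc] at hS
  exact hS

/-- Convexity of the set `S(t,y)` in the Filippov–Cesari existence theorem for
the controlled mosquito model: with a convex quadratic running cost `g` in the
control and all components of the autonomized vector field `Y` affine in the
control (with the stated structure), the set
`S = {(g(y,u)+γ, Y₁(y,u), …, Y₆(y,u)) : γ ≥ 0, u ∈ B}` is convex. -/
theorem filippov_cesari_set_convex
    (a₁ a₂ : ℝ) (ha₁ : 0 < a₁) (ha₂ : 0 < a₂)
    (ω₁ ω₂ Wy : ℝ) (hω₁ : 0 < ω₁) (hω₂ : 0 < ω₂) (hWy : 0 ≤ Wy)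
    (g : (Fin 2 → ℝ) → ℝ)
    (hg : ∀ u, g u = (1 / 2) * (Wy + ω₁ * (u 0) ^ 2 + ω₂ * (u 1) ^ 2))
    (Y : (Fin 2 → ℝ) → Fin 6 → ℝ)
    -- each component of Y is affine in u
    (c0 c1 c2 : Fin 6 → ℝ)
    (hY : ∀ u i, Y u i = c0 i + c1 i * u 0 + c2 i * u 1)
    -- Y₁ depends only (linearly) on u₁; Y₂ constant in u; Y₄, Y₅ affine in u₂ only
    (hY1 : c2 0 = 0) (hY2 : c1 1 = 0 ∧ c2 1 = 0) (hY4 : c1 3 = 0) (hY5 : c1 4 = 0)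
    -- Y₆ ≡ 1
    (hY6 : ∀ u, Y u 5 = 1) :
    Convex ℝ {ξ : Fin 7 → ℝ | ∃ γ : ℝ, 0 ≤ γ ∧ ∃ u : Fin 2 → ℝ,
      u 0 ∈ Icc 0 a₁ ∧ u 1 ∈ Icc 0 a₂ ∧
      ξ 0 = g u + γ ∧ ∀ i : Fin 6, ξ i.succ = Y u i} :=
  filippov_cesari_set_convex_general a₁ a₂ ω₁ ω₂ Wy hω₁ hω₂ g hg Y c0 c1 c2 hY
end
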